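/- arXiv:2308.11842 — 9 statements merged into one kernel-verified Lean document; each statement's English description precedes it below -/
import Mathlib

section
/- In a finite G-symmetric MDP (transition P and reward r equivariant under group actions L_g on states and K_g on actions), for any G-invariant deterministic policy π (i.e., K_g[π(s)] = π(L_g[s])), the value function is G-invariant: V_π(s) = V_π(L_g[s]) for all s and g. -/
/-!
The map `s ↦ V (g • s)` solves the same Bellman equation as `V`: substitute `g • s` into the
equation, reindex the sum over next states by `g`, and use the invariance of `P`, `r` and `π`.
Bellman equations with discount `|γ| < 1` and a stochastic kernel have at most one solution,
since the difference `D` of two solutions satisfies `D = γ K D`, so at a maximiser of `|D|`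
we get `|D| ≤ |γ| |D|`.
-/

open Finset

section Stochastic

variable {S : Type*} [Fintype S] {K : S → S → ℝ} {γ : ℝ}

theorem abs_sum_mul_le_of_stochastic (hK0 : ∀ s t, 0 ≤ K s t) (hK1 : ∀ s, ∑ t, K s t = 1)
    {D : S → ℝ} {M : ℝ} (hM : ∀ t, |D t| ≤ M) (s : S) : |∑ t, K s t * D t| ≤ M :=
  calc |∑ t, K s t * D t| ≤ ∑ t, |K s t * D t| := abs_sum_le_sum_abs _ _
    _ ≤ ∑ t, K s t * M := sum_le_sum fun t _ => by
        rw [abs_mul, abs_of_nonneg (hK0 s t)]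
        exact mul_le_mul_of_nonneg_left (hM t) (hK0 s t)
    _ = M := by rw [← sum_mul, hK1, one_mul]

theorem eq_zero_of_eq_discounted_average (hK0 : ∀ s t, 0 ≤ K s t)
    (hK1 : ∀ s, ∑ t, K s t = 1) (hγ : |γ| < 1) {D : S → ℝ}
    (hD : ∀ s, D s = γ * ∑ t, K s t * D t) : D = 0 := by
  funext s
  obtain ⟨s₀, -, hs₀⟩ := exists_max_image univ (fun t => |D t|) ⟨s, mem_univ s⟩
  have hmax : ∀ t, |D t| ≤ |D s₀| := fun t => hs₀ t (mem_univ t)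
  have hcontract : |D s₀| ≤ |γ| * |D s₀| := by
    calc |D s₀| = |γ| * |∑ t, K s₀ t * D t| := by rw [← abs_mul, ← hD]
      _ ≤ |γ| * |D s₀| := 
          mul_le_mul_of_nonneg_left (abs_sum_mul_le_of_stochastic hK0 hK1 hmax s₀) (abs_nonneg γ)
  have hs₀_zero : |D s₀| = 0 := by nlinarith [abs_nonneg (D s₀)]
  exact abs_nonpos_iff.mp (hs₀_zero ▸ hmax s)

theorem eq_of_bellman_eq (hK0 : ∀ s t, 0 ≤ K s t) (hK1 : ∀ s, ∑ t, K s t = 1)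
    (hγ : |γ| < 1) {r V W : S → ℝ}
    (hV : ∀ s, V s = r s + γ * ∑ t, K s t * V t)
    (hW : ∀ s, W s = r s + γ * ∑ t, K s t * W t) : V = W := by
  refine sub_eq_zero.mp (eq_zero_of_eq_discounted_average hK0 hK1 hγ fun s => ?_)
  simp only [Pi.sub_apply, mul_sub, sum_sub_distrib]
  rw [hV s, hW s]
  ring

end Stochastic

theorem bellman_eq_comp_smul {S A G : Type*} [Fintype S] [Group G] [MulAction G S]
    [MulAction G A] {P : S → A → S → ℝ} {r : S → A → ℝ} {γ : ℝ}
    (hP : ∀ (s : S) (a : A) (s' : S) (g : G), P s a s' = P (g • s) (g • a) (g • s'))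
    (hr : ∀ (s : S) (a : A) (g : G), r s a = r (g • s) (g • a))
    {π : S → A} (hπ : ∀ (g : G) (s : S), g • π s = π (g • s)) {V : S → ℝ}
    (hV : ∀ s, V s = r s (π s) + γ * ∑ s', P s (π s) s' * V s') (g : G) (s : S) :
    V (g • s) = r s (π s) + γ * ∑ t, P s (π s) t * V (g • t) := by
  rw [hV (g • s), ← hπ, ← hr, ← Equiv.sum_comp (MulAction.toPerm g : Equiv.Perm S)]
  simp only [MulAction.toPerm_apply, ← hP]

theorem stmt_1_general {S A G : Type*} [Fintype S] [Group G]
    [MulAction G S] [MulAction G A]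
    (P : S → A → S → ℝ) (r : S → A → ℝ) (γ : ℝ)
    (hγ0 : 0 ≤ γ) (hγ1 : γ < 1)
    (hPnn : ∀ s a s', 0 ≤ P s a s') (hPsum : ∀ s a, ∑ s', P s a s' = 1)
    (hP : ∀ (s : S) (a : A) (s' : S) (g : G), P s a s' = P (g • s) (g • a) (g • s'))
    (hr : ∀ (s : S) (a : A) (g : G), r s a = r (g • s) (g • a))
    (π : S → A) (hπ : ∀ (g : G) (s : S), g • π s = π (g • s))
    (V : S → ℝ)
    (hV : ∀ s, V s = r s (π s) + γ * ∑ s', P s (π s) s' * V s')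
    (s : S) (g : G) : V s = V (g • s) := by
  have hγ : |γ| < 1 := abs_lt.mpr ⟨by linarith, hγ1⟩
  have hVg := bellman_eq_comp_smul hP hr hπ hV g
  exact congrFun (eq_of_bellman_eq (fun s => hPnn s (π s)) (fun s => hPsum s (π s)) hγ hV hVg) s

theorem stmt_1 {S A G : Type*} [Fintype S] [Fintype A] [Group G]
    [MulAction G S] [MulAction G A]
    (P : S → A → S → ℝ) (r : S → A → ℝ) (γ : ℝ)
    (hγ0 : 0 ≤ γ) (hγ1 : γ < 1)
    (hPnn : ∀ s a s', 0 ≤ P s a s') (hPsum : ∀ s a, ∑ s', P s a s' = 1)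
    (hP : ∀ (s : S) (a : A) (s' : S) (g : G), P s a s' = P (g • s) (g • a) (g • s'))
    (hr : ∀ (s : S) (a : A) (g : G), r s a = r (g • s) (g • a))
    (π : S → A) (hπ : ∀ (g : G) (s : S), g • π s = π (g • s))
    (V : S → ℝ)
    (hV : ∀ s, V s = r s (π s) + γ * ∑ s', P s (π s) s' * V s')
    (s : S) (g : G) : V s = V (g • s) :=
  stmt_1_general P r γ hγ0 hγ1 hPnn hPsum hP hr π hπ V hV s g
end

section
/- In a finite G-symmetric MDP, for any G-invariant deterministic policy π, the action-value function is G-invariant: Q_π(s,a) = Q_π(L_g[s], K_g[a]) for all s, a, g. -/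
/-!
The value function `V` of `π` is the unique solution of its Bellman equation, because the
discounted policy-evaluation operator is a `γ`-contraction in the sup norm. Equivariance of
`P`, `r` and `π` shows that `s ↦ V (g • s)` solves the same equation, so `V` is `G`-invariant;
`Q` is then invariant because it is computed from `r`, `P` and `V` alone.
-/

open Finset

section PolicyEvaluation

variable {S : Type*} [Fintype S] {M : S → S → ℝ} {γ : ℝ}

theorem abs_sum_mul_le_of_stochastic_s2 (hMnn : ∀ s t, 0 ≤ M s t) (hMsum : ∀ s, ∑ t, M s t = 1)
    {f : S → ℝ} {B : ℝ} (hf : ∀ t, |f t| ≤ B) (s : S) : |∑ t, M s t * f t| ≤ B :=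
  calc |∑ t, M s t * f t|
      ≤ ∑ t, M s t * |f t| := by
        refine (abs_sum_le_sum_abs _ _).trans_eq (sum_congr rfl fun t _ => ?_)
        rw [abs_mul, abs_of_nonneg (hMnn s t)]
    _ ≤ ∑ t, M s t * B := sum_le_sum fun t _ => mul_le_mul_of_nonneg_left (hf t) (hMnn s t)
    _ = B := by rw [← sum_mul, hMsum, one_mul]

theorem eq_zero_of_eq_discounted_expectation (hγ0 : 0 ≤ γ) (hγ1 : γ < 1)
    (hMnn : ∀ s t, 0 ≤ M s t) (hMsum : ∀ s, ∑ t, M s t = 1)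
    {D : S → ℝ} (hD : ∀ s, D s = γ * ∑ t, M s t * D t) : D = 0 := by
  rcases isEmpty_or_nonempty S with hS | hS
  · exact funext hS.elim
  obtain ⟨s₀, -, hmax⟩ := exists_max_image univ (fun s => |D s|) univ_nonempty
  have hbound : ∀ t, |D t| ≤ |D s₀| := fun t => hmax t (mem_univ t)
  have hcontract : |D s₀| ≤ γ * |D s₀| := by
    conv_lhs => rw [hD s₀, abs_mul, abs_of_nonneg hγ0]
    exact mul_le_mul_of_nonneg_left
      (abs_sum_mul_le_of_stochastic_s2 hMnn hMsum hbound s₀) hγ0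
  have hzero : |D s₀| = 0 := by nlinarith [abs_nonneg (D s₀)]
  funext t
  exact abs_nonpos_iff.mp (hzero ▸ hbound t)

theorem eq_of_bellman_eq_s2 (hγ0 : 0 ≤ γ) (hγ1 : γ < 1)
    (hMnn : ∀ s t, 0 ≤ M s t) (hMsum : ∀ s, ∑ t, M s t = 1) {c V W : S → ℝ}
    (hV : ∀ s, V s = c s + γ * ∑ t, M s t * V t)
    (hW : ∀ s, W s = c s + γ * ∑ t, M s t * W t) : V = W := by
  refine sub_eq_zero.mp (eq_zero_of_eq_discounted_expectation hγ0 hγ1 hMnn hMsum fun s => ?_)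
  rw [Pi.sub_apply, hV s, hW s]
  simp only [Pi.sub_apply, mul_sub, sum_sub_distrib]
  ring

end PolicyEvaluation

theorem sum_mul_comp_smul_of_equivariant {S A G : Type*} [Fintype S] [Group G]
    [MulAction G S] [MulAction G A] {P : S → A → S → ℝ}
    (hP : ∀ (s : S) (a : A) (s' : S) (g : G), P s a s' = P (g • s) (g • a) (g • s'))
    (f : S → ℝ) (s : S) (a : A) (g : G) :
    ∑ s', P (g • s) (g • a) s' * f s' = ∑ t, P s a t * f (g • t) :=
  (Fintype.sum_equiv (MulAction.toPerm g) _ _ fun t => by simp [← hP]).symm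

theorem stmt_2_general {S A G : Type*} [Fintype S] [Group G]
    [MulAction G S] [MulAction G A]
    (P : S → A → S → ℝ) (r : S → A → ℝ) (γ : ℝ)
    (hγ0 : 0 ≤ γ) (hγ1 : γ < 1)
    (hPnn : ∀ s a s', 0 ≤ P s a s') (hPsum : ∀ s a, ∑ s', P s a s' = 1)
    (hP : ∀ (s : S) (a : A) (s' : S) (g : G), P s a s' = P (g • s) (g • a) (g • s'))
    (hr : ∀ (s : S) (a : A) (g : G), r s a = r (g • s) (g • a))
    (π : S → A) (hπ : ∀ (g : G) (s : S), g • π s = π (g • s))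
    (V : S → ℝ)
    (hV : ∀ s, V s = r s (π s) + γ * ∑ s', P s (π s) s' * V s')
    (Q : S → A → ℝ)
    (hQ : ∀ s a, Q s a = r s a + γ * ∑ s', P s a s' * V s')
    (s : S) (a : A) (g : G) : Q s a = Q (g • s) (g • a) := by
  have hVg : ∀ t, V (g • t) = V t := congrFun <|
    eq_of_bellman_eq_s2 hγ0 hγ1 (fun s => hPnn s (π s)) (fun s => hPsum s (π s))
      (fun t => by rw [hV, ← hπ, ← hr, sum_mul_comp_smul_of_equivariant hP]) hV
  simp_rw [hQ, ← hr, sum_mul_comp_smul_of_equivariant hP, hVg]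

theorem stmt_2 {S A G : Type*} [Fintype S] [Fintype A] [Group G]
    [MulAction G S] [MulAction G A]
    (P : S → A → S → ℝ) (r : S → A → ℝ) (γ : ℝ)
    (hγ0 : 0 ≤ γ) (hγ1 : γ < 1)
    (hPnn : ∀ s a s', 0 ≤ P s a s') (hPsum : ∀ s a, ∑ s', P s a s' = 1)
    (hP : ∀ (s : S) (a : A) (s' : S) (g : G), P s a s' = P (g • s) (g • a) (g • s'))
    (hr : ∀ (s : S) (a : A) (g : G), r s a = r (g • s) (g • a))
    (π : S → A) (hπ : ∀ (g : G) (s : S), g • π s = π (g • s))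
    (V : S → ℝ)
    (hV : ∀ s, V s = r s (π s) + γ * ∑ s', P s (π s) s' * V s')
    (Q : S → A → ℝ)
    (hQ : ∀ s a, Q s a = r s a + γ * ∑ s', P s a s' * V s')
    (s : S) (a : A) (g : G) : Q s a = Q (g • s) (g • a) :=
  stmt_2_general P r γ hγ0 hγ1 hPnn hPsum hP hr π hπ V hV Q hQ s a g
end

section
/- In a finite G-symmetric MDP, the optimal value function is G-invariant: V*(s) = V*(L_g[s]) for all s ∈ S and g ∈ G. -/
/-!
The Bellman optimality operator is a `γ`-contraction for the sup distance on `S → ℝ`, so it has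
at most one fixed point. Symmetry of `P` and `r` makes it commute with precomposition by
`s ↦ g • s`; hence `V ∘ (g • ·)` is again a fixed point and must equal `V`.
-/

open Finset

lemma dist_ciSup_ciSup_le {ι : Type*} [Fintype ι] [Nonempty ι] (f h : ι → ℝ) :
    dist (⨆ i, f i) (⨆ i, h i) ≤ dist f h := by
  have hf : BddAbove (Set.range f) := (Set.finite_range f).bddAbove
  have hh : BddAbove (Set.range h) := (Set.finite_range h).bddAbove
  have hcoord i := abs_sub_le_iff.1 (dist_le_pi_dist f h i)
  rw [Real.dist_eq, abs_sub_le_iff, sub_le_iff_le_add, sub_le_iff_le_add]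
  constructor
  · exact ciSup_le fun i => by linarith [(hcoord i).1, le_ciSup hh i]
  · exact ciSup_le fun i => by linarith [(hcoord i).2, le_ciSup hf i]

lemma dist_sum_mul_le_of_stochastic {ι : Type*} [Fintype ι] {p : ι → ℝ} (hp : ∀ i, 0 ≤ p i)
    (hp1 : ∑ i, p i = 1) (x y : ι → ℝ) :
    dist (∑ i, p i * x i) (∑ i, p i * y i) ≤ dist x y :=
  calc dist (∑ i, p i * x i) (∑ i, p i * y i)
      ≤ ∑ i, dist (p i * x i) (p i * y i) := dist_sum_sum_le _ _ _
    _ = ∑ i, p i * dist (x i) (y i) := by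
        simp only [← smul_eq_mul, dist_smul₀, Real.norm_of_nonneg (hp _)]
    _ ≤ ∑ i, p i * dist x y :=
        sum_le_sum fun i _ => mul_le_mul_of_nonneg_left (dist_le_pi_dist x y i) (hp i)
    _ = dist x y := by rw [← sum_mul, hp1, one_mul]

section Bellman

variable {S A : Type*} [Fintype S]

noncomputable def bellman (P : S → A → S → ℝ) (r : S → A → ℝ) (γ : ℝ) (V : S → ℝ) : S → ℝ :=
  fun s => ⨆ a, r s a + γ * ∑ s', P s a s' * V s'

lemma bellman_contractingWith [Fintype A] [Nonempty A]
    {P : S → A → S → ℝ} {r : S → A → ℝ} {γ : ℝ}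
    (hγ0 : 0 ≤ γ) (hγ1 : γ < 1) (hPnn : ∀ s a s', 0 ≤ P s a s')
    (hPsum : ∀ s a, ∑ s', P s a s' = 1) :
    ContractingWith ⟨γ, hγ0⟩ (bellman P r γ) := by
  refine ⟨hγ1, LipschitzWith.of_dist_le_mul fun V W => ?_⟩
  have hγV : 0 ≤ γ * dist V W := mul_nonneg hγ0 dist_nonneg
  refine (dist_pi_le_iff hγV).2 fun s => (dist_ciSup_ciSup_le _ _).trans ?_
  refine (dist_pi_le_iff hγV).2 fun a => ?_
  rw [dist_add_left, ← smul_eq_mul, ← smul_eq_mul γ, dist_smul₀, Real.norm_of_nonneg hγ0]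
  exact mul_le_mul_of_nonneg_left
    (dist_sum_mul_le_of_stochastic (hPnn s a) (hPsum s a) V W) hγ0

lemma bellman_comp_smul {G : Type*} [Group G] [MulAction G S] [MulAction G A]
    {P : S → A → S → ℝ} {r : S → A → ℝ} (γ : ℝ)
    (hP : ∀ s a s' (g : G), P s a s' = P (g • s) (g • a) (g • s'))
    (hr : ∀ s a (g : G), r s a = r (g • s) (g • a)) (g : G) (V : S → ℝ) :
    bellman P r γ (fun s => V (g • s)) = fun s => bellman P r γ V (g • s) := by
  funext t
  symm
  rw [bellman, bellman, ← (MulAction.toPerm g : Equiv.Perm A).iSup_comp]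
  congr! 3 with a
  · exact (hr t a g).symm
  · rw [← Equiv.sum_comp (MulAction.toPerm g : Equiv.Perm S)]
    congr 1
    exact sum_congr rfl fun s' _ => by rw [MulAction.toPerm_apply, MulAction.toPerm_apply, ← hP]

end Bellman

theorem stmt_3 {S A G : Type*} [Fintype S] [Fintype A] [Nonempty A] [Group G]
    [MulAction G S] [MulAction G A]
    (P : S → A → S → ℝ) (r : S → A → ℝ) (γ : ℝ)
    (hγ0 : 0 ≤ γ) (hγ1 : γ < 1)
    (hPnn : ∀ s a s', 0 ≤ P s a s') (hPsum : ∀ s a, ∑ s', P s a s' = 1)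
    (hP : ∀ (s : S) (a : A) (s' : S) (g : G), P s a s' = P (g • s) (g • a) (g • s'))
    (hr : ∀ (s : S) (a : A) (g : G), r s a = r (g • s) (g • a))
    (V : S → ℝ)
    (hV : ∀ s, V s = ⨆ a : A, (r s a + γ * ∑ s', P s a s' * V s'))
    (s : S) (g : G) : V s = V (g • s) := by
  have hfix : bellman P r γ V = V := (funext hV).symm
  have hfix_smul : bellman P r γ (fun s => V (g • s)) = fun s => V (g • s) := by
    rw [bellman_comp_smul γ hP hr g, hfix]
  exact congrFun ((bellman_contractingWith hγ0 hγ1 hPnn hPsum).fixedPoint_unique' hfix hfix_smul) s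
end

section
/- In a finite G-symmetric MDP, there exists a G-invariant deterministic optimal policy, i.e., a policy π with K_g[π(s)] = π(L_g[s]) for all s, g, and V_π = V*, provided one can choose, in each G-orbit of states, a canonical maximizing action consistently (formally: if G acts freely on S, then such a G-invariant greedy policy with respect to Q* exists and is optimal). -/
/-!
Fix a representative in every orbit of states and a `Q`-maximising action at each representative.
Freeness gives each state `s` a unique `g` carrying its representative to `s`; transporting the
chosen action by that `g` defines the policy. Uniqueness of `g` makes the policy equivariant, and
invariance of `Q` makes the transported action maximise `Q s`.
-/

namespace MulAction

variable {G S A : Type*} [Group G] [MulAction G S] [MulAction G A]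

lemma smul_left_injective_of_free (hfree : ∀ (g : G) (s : S), g • s = s → g = 1) (s : S) :
    Function.Injective fun g : G => g • s := by
  intro g h hgh
  have : (h⁻¹ * g) • s = s := by
    simp only [mul_smul, hgh, inv_smul_smul]
  exact (inv_mul_eq_one.mp (hfree (h⁻¹ * g) s this)).symm

variable (G) in
noncomputable def orbitRep (s : S) : S :=
  (Quotient.mk (orbitRel G S) s).out

lemma orbitRep_smul (g : G) (s : S) : orbitRep G (g • s) = orbitRep G s := by
  have : Quotient.mk (orbitRel G S) (g • s) = Quotient.mk (orbitRel G S) s :=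
    Quotient.sound ⟨g, rfl⟩
  simp only [orbitRep, this]

lemma exists_smul_orbitRep_eq (s : S) : ∃ g : G, g • orbitRep G s = s := by
  obtain ⟨g, hg⟩ := mem_orbit_iff.mp (orbitRel_apply.mp (Quotient.mk_out (s := orbitRel G S) s))
  exact ⟨g⁻¹, inv_smul_eq_iff.mpr hg.symm⟩

lemma exists_equivariant_selection (hfree : ∀ (g : G) (s : S), g • s = s → g = 1)
    (P : S → A → Prop) (hP : ∀ (g : G) (s : S) (a : A), P s a → P (g • s) (g • a))
    (hex : ∀ s, ∃ a, P s a) :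
    ∃ π : S → A, (∀ (g : G) (s : S), g • π s = π (g • s)) ∧ ∀ s, P s (π s) := by
  choose carry hcarry using exists_smul_orbitRep_eq (G := G) (S := S)
  choose select hselect using hex
  have carry_smul (g : G) (s : S) : carry (g • s) = g * carry s := by
    apply smul_left_injective_of_free hfree (orbitRep G s)
    calc carry (g • s) • orbitRep G s = carry (g • s) • orbitRep G (g • s) := by
          rw [orbitRep_smul]
      _ = (g * carry s) • orbitRep G s := by rw [hcarry, mul_smul, hcarry]
  refine ⟨fun s => carry s • select (orbitRep G s), fun g s => ?_, fun s => ?_⟩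
  · simp only [orbitRep_smul, carry_smul, mul_smul]
  · simpa only [hcarry] using hP (carry s) _ _ (hselect (orbitRep G s))

end MulAction

theorem stmt_5_general {S A G : Type*} [Fintype A] [Nonempty A] [Group G]
    [MulAction G S] [MulAction G A]
    (Q : S → A → ℝ)
    (hQinv : ∀ (s : S) (a : A) (g : G), Q s a = Q (g • s) (g • a))
    (hfree : ∀ (g : G) (s : S), g • s = s → g = 1) :
    ∃ π : S → A, (∀ (g : G) (s : S), g • π s = π (g • s)) ∧
      (∀ s : S, Q s (π s) = ⨆ a : A, Q s a) := by
  have greedy_smul (g : G) (s : S) (a : A) (ha : ∀ b, Q s b ≤ Q s a) (b : A) :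
      Q (g • s) b ≤ Q (g • s) (g • a) := by
    rw [← hQinv, ← smul_inv_smul g b, ← hQinv]
    exact ha _
  obtain ⟨π, hequiv, hgreedy⟩ := MulAction.exists_equivariant_selection hfree
    (fun s a => ∀ b, Q s b ≤ Q s a) greedy_smul (fun s => Finite.exists_max (Q s))
  exact ⟨π, hequiv, fun s =>
    (ciSup_eq_of_forall_le_of_forall_lt_exists_gt (hgreedy s) fun _ hw => ⟨π s, hw⟩).symm⟩

theorem stmt_5 {S A G : Type*} [Fintype S] [Fintype A] [Nonempty A] [Group G]
    [MulAction G S] [MulAction G A]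
    (Q : S → A → ℝ)
    (hQinv : ∀ (s : S) (a : A) (g : G), Q s a = Q (g • s) (g • a))
    (hfree : ∀ (g : G) (s : S), g • s = s → g = 1) :
    ∃ π : S → A, (∀ (g : G) (s : S), g • π s = π (g • s)) ∧
      (∀ s : S, Q s (π s) = ⨆ a : A, Q s a) :=
  stmt_5_general Q hQinv hfree
end

section
/- In a G-symmetric MDP, the Bellman optimality operator commutes with group transformations: if T is the Bellman optimality operator on bounded functions V: S → ℝ, and (g·V)(s) := V(L_{g^{-1}}[s]), then T(g·V) = g·(T V) for all g ∈ G. -/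
section

variable {S A G : Type*} [Fintype S] [Group G] [MulAction G S] [MulAction G A]

theorem sum_transition_mul_comp_smul_inv (P : S → A → S → ℝ)
    (hP : ∀ (s : S) (a : A) (s' : S) (g : G), P s a s' = P (g • s) (g • a) (g • s'))
    (V : S → ℝ) (g : G) (s : S) (a : A) :
    ∑ s', P s a s' * V (g⁻¹ • s') = ∑ s', P (g⁻¹ • s) (g⁻¹ • a) s' * V s' :=
  Fintype.sum_equiv (MulAction.toPerm g⁻¹) _ _ fun s' => by rw [hP s a s' g⁻¹]; rfl

theorem qValue_comp_smul_inv (P : S → A → S → ℝ) (r : S → A → ℝ) (γ : ℝ)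
    (hP : ∀ (s : S) (a : A) (s' : S) (g : G), P s a s' = P (g • s) (g • a) (g • s'))
    (hr : ∀ (s : S) (a : A) (g : G), r s a = r (g • s) (g • a))
    (V : S → ℝ) (g : G) (s : S) (a : A) :
    r s a + γ * ∑ s', P s a s' * V (g⁻¹ • s') =
      r (g⁻¹ • s) (g⁻¹ • a) + γ * ∑ s', P (g⁻¹ • s) (g⁻¹ • a) s' * V s' := by
  rw [hr s a g⁻¹, sum_transition_mul_comp_smul_inv P hP]

end

theorem stmt_6_general {S A G : Type*} [Fintype S] [Group G]
    [MulAction G S] [MulAction G A]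
    (P : S → A → S → ℝ) (r : S → A → ℝ) (γ : ℝ)
    (hP : ∀ (s : S) (a : A) (s' : S) (g : G), P s a s' = P (g • s) (g • a) (g • s'))
    (hr : ∀ (s : S) (a : A) (g : G), r s a = r (g • s) (g • a))
    (T : (S → ℝ) → (S → ℝ))
    (hT : ∀ (V : S → ℝ) (s : S), T V s = ⨆ a : A, (r s a + γ * ∑ s', P s a s' * V s'))
    (V : S → ℝ) (g : G) :
    T (fun s => V (g⁻¹ • s)) = fun s => T V (g⁻¹ • s) := by
  funext s
  rw [hT, hT]
  calc ⨆ a : A, (r s a + γ * ∑ s', P s a s' * V (g⁻¹ • s'))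
      = ⨆ a : A, (r (g⁻¹ • s) (g⁻¹ • a) + γ * ∑ s', P (g⁻¹ • s) (g⁻¹ • a) s' * V s') :=
        iSup_congr (qValue_comp_smul_inv P r γ hP hr V g s)
    _ = ⨆ a : A, (r (g⁻¹ • s) a + γ * ∑ s', P (g⁻¹ • s) a s' * V s') :=
        (MulAction.toPerm g⁻¹ : Equiv.Perm A).iSup_comp
          (g := fun a => r (g⁻¹ • s) a + γ * ∑ s', P (g⁻¹ • s) a s' * V s')

theorem stmt_6 {S A G : Type*} [Fintype S] [Fintype A] [Nonempty A] [Group G]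
    [MulAction G S] [MulAction G A]
    (P : S → A → S → ℝ) (r : S → A → ℝ) (γ : ℝ)
    (hP : ∀ (s : S) (a : A) (s' : S) (g : G), P s a s' = P (g • s) (g • a) (g • s'))
    (hr : ∀ (s : S) (a : A) (g : G), r s a = r (g • s) (g • a))
    (T : (S → ℝ) → (S → ℝ))
    (hT : ∀ (V : S → ℝ) (s : S), T V s = ⨆ a : A, (r s a + γ * ∑ s', P s a s' * V s'))
    (V : S → ℝ) (g : G) :
    T (fun s => V (g⁻¹ • s)) = fun s => T V (g⁻¹ • s) :=
  stmt_6_general P r γ hP hr T hT V g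
end

section
/- For a surjective MDP homomorphism (l, k) from a finite MDP M onto a finite abstract MDP M̄, and a deterministic abstract policy π̄ with lift π (i.e., k(π(s)) = π̄(l(s))), the values agree: V_π(s) = V̄_π̄(l(s)) for all s ∈ S. -/
open scoped Classical

/-!
The pulled-back abstract value `Vb ∘ l` satisfies the Bellman equation of the lifted policy in
the concrete MDP: rewards agree, and summing the transition probabilities over the fibres of `l`
reproduces the abstract ones. That equation has only one solution, because the difference of two
solutions `f` satisfies `f = γ • Q f` with `Q` stochastic, so `‖f‖∞ ≤ γ ‖f‖∞`.
-/

open Finset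

theorem sum_mul_comp_eq_sum_fiber_mul {α β R : Type*} [Fintype α] [Fintype β]
    [NonUnitalNonAssocSemiring R] (l : α → β) (p : α → R) (g : β → R) :
    ∑ a, p a * g (l a) = ∑ b, (∑ a ∈ univ.filter (fun a => l a = b), p a) * g b := by
  rw [← sum_fiberwise univ l (fun a => p a * g (l a))]
  refine sum_congr rfl fun b _ => ?_
  rw [sum_mul]
  exact sum_congr rfl fun a ha => by rw [(mem_filter.mp ha).2]

theorem abs_sum_mul_le_of_stochastic_s9 {α : Type*} [Fintype α] {p f : α → ℝ} {M : ℝ}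
    (hp : ∀ a, 0 ≤ p a) (hsum : ∑ a, p a = 1) (hf : ∀ a, |f a| ≤ M) :
    |∑ a, p a * f a| ≤ M :=
  calc |∑ a, p a * f a| ≤ ∑ a, |p a * f a| := abs_sum_le_sum_abs _ _
    _ ≤ ∑ a, p a * M := sum_le_sum fun a _ => by
        rw [abs_mul, abs_of_nonneg (hp a)]
        exact mul_le_mul_of_nonneg_left (hf a) (hp a)
    _ = M := by rw [← sum_mul, hsum, one_mul]

theorem eq_zero_of_eq_discount_mul_stochastic {α : Type*} [Fintype α]
    {Q : α → α → ℝ} {γ : ℝ} {f : α → ℝ}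
    (hγ0 : 0 ≤ γ) (hγ1 : γ < 1) (hQnn : ∀ a b, 0 ≤ Q a b) (hQsum : ∀ a, ∑ b, Q a b = 1)
    (hf : ∀ a, f a = γ * ∑ b, Q a b * f b) : f = 0 := by
  funext a
  obtain ⟨a₀, -, ha₀⟩ := exists_max_image univ (fun a => |f a|) ⟨a, mem_univ a⟩
  have hmax : ∀ b, |f b| ≤ |f a₀| := fun b => ha₀ b (mem_univ b)
  have hcontract : |f a₀| ≤ γ * |f a₀| :=
    calc |f a₀| = γ * |∑ b, Q a₀ b * f b| := by rw [hf a₀, abs_mul, abs_of_nonneg hγ0]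
      _ ≤ γ * |f a₀| := mul_le_mul_of_nonneg_left
          (abs_sum_mul_le_of_stochastic_s9 (hQnn a₀) (hQsum a₀) hmax) hγ0
  have hzero : |f a₀| = 0 := by nlinarith [abs_nonneg (f a₀)]
  exact abs_nonpos_iff.mp (hzero ▸ hmax a)

theorem eq_of_bellman_eq_s9 {α : Type*} [Fintype α] {Q : α → α → ℝ} {c : α → ℝ} {γ : ℝ}
    {V W : α → ℝ}
    (hγ0 : 0 ≤ γ) (hγ1 : γ < 1) (hQnn : ∀ a b, 0 ≤ Q a b) (hQsum : ∀ a, ∑ b, Q a b = 1)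
    (hV : ∀ a, V a = c a + γ * ∑ b, Q a b * V b)
    (hW : ∀ a, W a = c a + γ * ∑ b, Q a b * W b) : V = W :=
  sub_eq_zero.mp <| eq_zero_of_eq_discount_mul_stochastic hγ0 hγ1 hQnn hQsum fun a => by
    simp only [Pi.sub_apply, mul_sub, sum_sub_distrib]
    rw [hV a, hW a]
    ring

theorem bellman_comp_of_lift {S A Sb Ab : Type*} [Fintype S] [Fintype Sb]
    {P : S → A → S → ℝ} {r : S → A → ℝ} {Pb : Sb → Ab → Sb → ℝ} {rb : Sb → Ab → ℝ} {γ : ℝ}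
    {l : S → Sb} {k : A → Ab} {π : S → A} {πb : Sb → Ab} {Vb : Sb → ℝ}
    (hr : ∀ s a, r s a = rb (l s) (k a))
    (hPh : ∀ s a sb', ∑ s' ∈ univ.filter (fun s' => l s' = sb'), P s a s' = Pb (l s) (k a) sb')
    (hlift : ∀ s, k (π s) = πb (l s))
    (hVb : ∀ sb, Vb sb = rb sb (πb sb) + γ * ∑ sb', Pb sb (πb sb) sb' * Vb sb') (s : S) :
    Vb (l s) = r s (π s) + γ * ∑ s', P s (π s) s' * Vb (l s') := by
  rw [hVb (l s), hr, hlift, sum_mul_comp_eq_sum_fiber_mul l (P s (π s))]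
  simp only [hPh, hlift]

theorem stmt_9_general {S A Sb Ab : Type*} [Fintype S] [Fintype Sb]
    (P : S → A → S → ℝ) (r : S → A → ℝ)
    (Pb : Sb → Ab → Sb → ℝ) (rb : Sb → Ab → ℝ) (γ : ℝ)
    (hγ0 : 0 ≤ γ) (hγ1 : γ < 1)
    (hPnn : ∀ s a s', 0 ≤ P s a s') (hPsum : ∀ s a, ∑ s', P s a s' = 1)
    (l : S → Sb) (k : A → Ab)
    (hr : ∀ s a, r s a = rb (l s) (k a))
    (hPh : ∀ (s : S) (a : A) (sb' : Sb),
      ∑ s' ∈ Finset.univ.filter (fun s' => l s' = sb'), P s a s' = Pb (l s) (k a) sb')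
    (π : S → A) (πb : Sb → Ab)
    (hlift : ∀ s, k (π s) = πb (l s))
    (V : S → ℝ) (Vb : Sb → ℝ)
    (hV : ∀ s, V s = r s (π s) + γ * ∑ s', P s (π s) s' * V s')
    (hVb : ∀ sb, Vb sb = rb sb (πb sb) + γ * ∑ sb', Pb sb (πb sb) sb' * Vb sb')
    (s : S) : V s = Vb (l s) :=
  congrFun (eq_of_bellman_eq_s9 (W := Vb ∘ l) hγ0 hγ1 (fun s => hPnn s (π s))
    (fun s => hPsum s (π s)) hV (bellman_comp_of_lift (l := l) hr hPh hlift hVb)) s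

theorem stmt_9 {S A Sb Ab : Type*} [Fintype S] [Fintype A] [Fintype Sb] [Fintype Ab]
    (P : S → A → S → ℝ) (r : S → A → ℝ)
    (Pb : Sb → Ab → Sb → ℝ) (rb : Sb → Ab → ℝ) (γ : ℝ)
    (hγ0 : 0 ≤ γ) (hγ1 : γ < 1)
    (hPnn : ∀ s a s', 0 ≤ P s a s') (hPsum : ∀ s a, ∑ s', P s a s' = 1)
    (hPbnn : ∀ sb ab sb', 0 ≤ Pb sb ab sb') (hPbsum : ∀ sb ab, ∑ sb', Pb sb ab sb' = 1)
    (l : S → Sb) (k : A → Ab)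
    (hl : Function.Surjective l) (hk : Function.Surjective k)
    (hr : ∀ s a, r s a = rb (l s) (k a))
    (hPh : ∀ (s : S) (a : A) (sb' : Sb),
      ∑ s' ∈ Finset.univ.filter (fun s' => l s' = sb'), P s a s' = Pb (l s) (k a) sb')
    (π : S → A) (πb : Sb → Ab)
    (hlift : ∀ s, k (π s) = πb (l s))
    (V : S → ℝ) (Vb : Sb → ℝ)
    (hV : ∀ s, V s = r s (π s) + γ * ∑ s', P s (π s) s' * V s')
    (hVb : ∀ sb, Vb sb = rb sb (πb sb) + γ * ∑ sb', Pb sb (πb sb) sb' * Vb sb')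
    (s : S) : V s = Vb (l s) :=
  stmt_9_general P r Pb rb γ hγ0 hγ1 hPnn hPsum l k hr hPh π πb hlift V Vb hV hVb s
end

section
/- A G-symmetric MDP induces an MDP homomorphism onto its quotient: with S̄ = S/G (orbit space under the actions L_g) and Ā = (S × A)/∼ where (s,a) ∼ (L_g[s], K_g[a]), the quotient reward r̄ and quotient transition P̄ are well-defined, and the quotient maps form an MDP homomorphism. -/
open scoped Classical

/-!
The quotient reward and transition are lifts of `G`-invariant functions on `S × A`. For the
orbit-class sums of `P` the invariance holds because `s' ↦ g • s'` permutes each orbit class of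
`S`, so re-indexing the sum by it turns the equivariance of `P` into invariance.
-/

namespace MulAction

variable {G X : Type*} [Group G] [MulAction G X]

theorem exists_orbitRel_lift_of_smul_invariant {Y : Type*} (F : X → Y)
    (hF : ∀ (g : G) (x : X), F (g • x) = F x) :
    ∃ Fb : Quotient (orbitRel G X) → Y, ∀ x, F x = Fb (Quotient.mk (orbitRel G X) x) := by
  refine ⟨Quotient.lift F ?_, fun _ => rfl⟩
  rintro _ x ⟨g, rfl⟩
  exact hF g x

theorem sum_filter_orbitRel_mk_eq_comp_smul [Fintype X] {M : Type*} [AddCommMonoid M]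
    (f : X → M) (g : G) (c : Quotient (orbitRel G X)) :
    ∑ x ∈ Finset.univ.filter (fun x => Quotient.mk (orbitRel G X) x = c), f (g • x)
      = ∑ x ∈ Finset.univ.filter (fun x => Quotient.mk (orbitRel G X) x = c), f x :=
  Finset.sum_equiv (toPerm g) (by simp) (fun _ _ => rfl)

end MulAction

open MulAction

theorem stmt_11_general {S A G : Type*} [Fintype S] [Group G]
    [MulAction G S] [MulAction G A]
    (P : S → A → S → ℝ) (r : S → A → ℝ)
    (hP : ∀ (s : S) (a : A) (s' : S) (g : G), P s a s' = P (g • s) (g • a) (g • s'))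
    (hr : ∀ (s : S) (a : A) (g : G), r s a = r (g • s) (g • a)) :
    ∃ (rb : Quotient (MulAction.orbitRel G (S × A)) → ℝ)
      (Pb : Quotient (MulAction.orbitRel G (S × A)) → Quotient (MulAction.orbitRel G S) → ℝ),
      (∀ (s : S) (a : A), r s a = rb (Quotient.mk (MulAction.orbitRel G (S × A)) (s, a))) ∧
      (∀ (s : S) (a : A) (sb' : Quotient (MulAction.orbitRel G S)),
        ∑ s' ∈ Finset.univ.filter
            (fun s' => Quotient.mk (MulAction.orbitRel G S) s' = sb'), P s a s'
          = Pb (Quotient.mk (MulAction.orbitRel G (S × A)) (s, a)) sb') := by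
  obtain ⟨rb, hrb⟩ := exists_orbitRel_lift_of_smul_invariant (G := G)
    (fun p : S × A => r p.1 p.2) fun g p => (hr p.1 p.2 g).symm
  obtain ⟨Pb, hPb⟩ := exists_orbitRel_lift_of_smul_invariant (G := G)
    (fun (p : S × A) (sb' : Quotient (orbitRel G S)) =>
      ∑ s' ∈ Finset.univ.filter (fun s' => Quotient.mk (orbitRel G S) s' = sb'), P p.1 p.2 s')
    fun g p => funext fun sb' => by
      rw [← sum_filter_orbitRel_mk_eq_comp_smul _ g]
      exact Finset.sum_congr rfl fun s' _ => (hP p.1 p.2 s' g).symm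
  exact ⟨rb, Pb, fun s a => hrb (s, a), fun s a => congrFun (hPb (s, a))⟩

theorem stmt_11 {S A G : Type*} [Fintype S] [Fintype A] [Group G]
    [MulAction G S] [MulAction G A]
    (P : S → A → S → ℝ) (r : S → A → ℝ)
    (hP : ∀ (s : S) (a : A) (s' : S) (g : G), P s a s' = P (g • s) (g • a) (g • s'))
    (hr : ∀ (s : S) (a : A) (g : G), r s a = r (g • s) (g • a)) :
    ∃ (rb : Quotient (MulAction.orbitRel G (S × A)) → ℝ)
      (Pb : Quotient (MulAction.orbitRel G (S × A)) → Quotient (MulAction.orbitRel G S) → ℝ),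
      (∀ (s : S) (a : A), r s a = rb (Quotient.mk (MulAction.orbitRel G (S × A)) (s, a))) ∧
      (∀ (s : S) (a : A) (sb' : Quotient (MulAction.orbitRel G S)),
        ∑ s' ∈ Finset.univ.filter
            (fun s' => Quotient.mk (MulAction.orbitRel G S) s' = sb'), P s a s'
          = Pb (Quotient.mk (MulAction.orbitRel G (S × A)) (s, a)) sb') :=
  stmt_11_general P r hP hr
end

section
/- In a finite G-symmetric MDP where G acts on actions trivially on the reward and transition level (i.e., G-symmetry holds), if π is any deterministic policy, then the 'symmetrized' policy values satisfy V_{π^g}(s) = V_π(L_{g^{-1}}[s]), where π^g(s) := K_g[π(L_{g^{-1}}[s])]. -/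
/-!
The value of a policy is the unique solution of its Bellman equation, because the Bellman
operator of a discount `γ < 1` is a contraction for the sup norm. Transporting the Bellman
equation of `π` along `g` (using the `G`-invariance of `r` and `P` and reindexing the sum over
successor states by `s' ↦ g • s'`) shows that `s ↦ V (g⁻¹ • s)` solves the Bellman equation
of `π^g`, hence equals its value.
-/

open Finset

section PolicyValue

variable {S A : Type*} [Fintype S]

def IsPolicyValue (P : S → A → S → ℝ) (r : S → A → ℝ) (γ : ℝ) (π : S → A) (V : S → ℝ) :
    Prop :=
  ∀ s, V s = r s (π s) + γ * ∑ s', P s (π s) s' * V s'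

theorem eq_zero_of_eq_discount_mul_sum (Q : S → S → ℝ) {γ : ℝ} (hγ0 : 0 ≤ γ) (hγ1 : γ < 1)
    (hQnn : ∀ s s', 0 ≤ Q s s') (hQsum : ∀ s, ∑ s', Q s s' ≤ 1) {D : S → ℝ}
    (hD : ∀ s, D s = γ * ∑ s', Q s s' * D s') : D = 0 := by
  funext s
  have : Nonempty S := ⟨s⟩
  obtain ⟨s₀, hs₀⟩ := Finite.exists_max fun t => |D t|
  set M := |D s₀| with hM_def
  have hM : M ≤ γ * M := calc
    M = γ * |∑ s', Q s₀ s' * D s'| := by rw [hM_def, hD s₀, abs_mul, abs_of_nonneg hγ0]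
    _ ≤ γ * ∑ s', Q s₀ s' * M := by
      gcongr
      refine (abs_sum_le_sum_abs _ _).trans (sum_le_sum fun s' _ => ?_)
      rw [abs_mul, abs_of_nonneg (hQnn _ _)]
      exact mul_le_mul_of_nonneg_left (hs₀ s') (hQnn _ _)
    _ ≤ γ * M := by
      rw [← sum_mul]
      exact mul_le_mul_of_nonneg_left (mul_le_of_le_one_left (abs_nonneg _) (hQsum s₀)) hγ0
  have hM0 : M = 0 := by nlinarith [abs_nonneg (D s₀)]
  exact abs_nonpos_iff.mp (hM0 ▸ hs₀ s)

theorem IsPolicyValue.unique {P : S → A → S → ℝ} {r : S → A → ℝ} {γ : ℝ} {π : S → A}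
    {V W : S → ℝ} (hγ0 : 0 ≤ γ) (hγ1 : γ < 1) (hPnn : ∀ s a s', 0 ≤ P s a s')
    (hPsum : ∀ s a, ∑ s', P s a s' ≤ 1) (hV : IsPolicyValue P r γ π V)
    (hW : IsPolicyValue P r γ π W) : V = W := by
  have hVW : V - W = 0 := by
    refine eq_zero_of_eq_discount_mul_sum (fun s s' => P s (π s) s') hγ0 hγ1
      (fun _ _ => hPnn _ _ _) (fun s => hPsum s (π s)) fun s => ?_
    simp only [Pi.sub_apply, mul_sub, sum_sub_distrib]
    rw [hV s, hW s]
    ring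
  exact sub_eq_zero.mp hVW

end PolicyValue

theorem IsPolicyValue.smul {S A G : Type*} [Fintype S] [Group G] [MulAction G S]
    [MulAction G A] {P : S → A → S → ℝ} {r : S → A → ℝ} {γ : ℝ} {π : S → A} {V : S → ℝ}
    (hP : ∀ (s : S) (a : A) (s' : S) (g : G), P s a s' = P (g • s) (g • a) (g • s'))
    (hr : ∀ (s : S) (a : A) (g : G), r s a = r (g • s) (g • a))
    (hV : IsPolicyValue P r γ π V) (g : G) :
    IsPolicyValue P r γ (fun s => g • π (g⁻¹ • s)) (fun s => V (g⁻¹ • s)) := by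
  intro s
  beta_reduce
  have hsum : ∑ s', P (g⁻¹ • s) (π (g⁻¹ • s)) s' * V s' =
      ∑ s', P s (g • π (g⁻¹ • s)) s' * V (g⁻¹ • s') := by
    refine Fintype.sum_equiv (MulAction.toPerm g) _ _ fun s' => ?_
    rw [MulAction.toPerm_apply, inv_smul_smul, hP _ _ s' g, smul_inv_smul]
  rw [hV (g⁻¹ • s), hr _ _ g, smul_inv_smul, hsum]

theorem stmt_13_general {S A G : Type*} [Fintype S] [Group G]
    [MulAction G S] [MulAction G A]
    (P : S → A → S → ℝ) (r : S → A → ℝ) (γ : ℝ)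
    (hγ0 : 0 ≤ γ) (hγ1 : γ < 1)
    (hPnn : ∀ s a s', 0 ≤ P s a s') (hPsum : ∀ s a, ∑ s', P s a s' = 1)
    (hP : ∀ (s : S) (a : A) (s' : S) (g : G), P s a s' = P (g • s) (g • a) (g • s'))
    (hr : ∀ (s : S) (a : A) (g : G), r s a = r (g • s) (g • a))
    (π : S → A) (g : G)
    (πg : S → A) (hπg : ∀ s, πg s = g • π (g⁻¹ • s))
    (V Vg : S → ℝ)
    (hV : ∀ s, V s = r s (π s) + γ * ∑ s', P s (π s) s' * V s')
    (hVg : ∀ s, Vg s = r s (πg s) + γ * ∑ s', P s (πg s) s' * Vg s')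
    (s : S) : Vg s = V (g⁻¹ • s) := by
  obtain rfl : πg = fun s => g • π (g⁻¹ • s) := funext hπg
  have hVg' : IsPolicyValue P r γ _ Vg := hVg
  have hVπg := hVg'.unique hγ0 hγ1 hPnn (fun s a => (hPsum s a).le) (.smul hP hr hV g)
  exact congrFun hVπg s

theorem stmt_13 {S A G : Type*} [Fintype S] [Fintype A] [Group G]
    [MulAction G S] [MulAction G A]
    (P : S → A → S → ℝ) (r : S → A → ℝ) (γ : ℝ)
    (hγ0 : 0 ≤ γ) (hγ1 : γ < 1)
    (hPnn : ∀ s a s', 0 ≤ P s a s') (hPsum : ∀ s a, ∑ s', P s a s' = 1)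
    (hP : ∀ (s : S) (a : A) (s' : S) (g : G), P s a s' = P (g • s) (g • a) (g • s'))
    (hr : ∀ (s : S) (a : A) (g : G), r s a = r (g • s) (g • a))
    (π : S → A) (g : G)
    (πg : S → A) (hπg : ∀ s, πg s = g • π (g⁻¹ • s))
    (V Vg : S → ℝ)
    (hV : ∀ s, V s = r s (π s) + γ * ∑ s', P s (π s) s' * V s')
    (hVg : ∀ s, Vg s = r s (πg s) + γ * ∑ s', P s (πg s) s' * Vg s')
    (s : S) : Vg s = V (g⁻¹ • s) :=
  stmt_13_general P r γ hγ0 hγ1 hPnn hPsum hP hr π g πg hπg V Vg hV hVg s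
end

section
/- In a finite G-symmetric MDP, if V: S → ℝ is G-invariant (V(s) = V(L_g[s]) for all g), then the one-step Bellman optimality update TV is also G-invariant; consequently, by induction and contraction, the limit V* = lim Tⁿ V₀ from a G-invariant initialization V₀ is G-invariant. -/
/-!
Reindexing the next-state sum by `s' ↦ g • s'` shows that the Bellman backup of an invariant `V`
at `(g • s, g • a)` equals the one at `(s, a)`; reindexing the supremum over actions by
`a ↦ g • a` then gives `T V (g • s) = T V s`. Invariance passes to all iterates `T^[n] V₀` and,
by uniqueness of limits in `ℝ`, to their pointwise limit.
-/

open Filter Topology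

def invariantFunctions (G S β : Type*) [SMul G S] : Set (S → β) :=
  {V | ∀ (g : G) (s : S), V s = V (g • s)}

theorem mem_invariantFunctions_of_tendsto {G S β ι : Type*} [SMul G S] [TopologicalSpace β]
    [T2Space β] {l : Filter ι} [l.NeBot] {F : ι → S → β} {V : S → β}
    (hF : ∀ i, F i ∈ invariantFunctions G S β) (hlim : ∀ s, Tendsto (fun i => F i s) l (𝓝 (V s))) :
    V ∈ invariantFunctions G S β := fun g s =>
  tendsto_nhds_unique ((hlim s).congr fun i => hF i g s) (hlim (g • s))

section Bellman

variable {S A G : Type*} [Fintype S] [Group G] [MulAction G S] [MulAction G A]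
  {P : S → A → S → ℝ} {r : S → A → ℝ} {γ : ℝ}

theorem sum_transition_mul_smul (hP : ∀ s a s' (g : G), P s a s' = P (g • s) (g • a) (g • s'))
    {V : S → ℝ} (hV : V ∈ invariantFunctions G S ℝ) (g : G) (s : S) (a : A) :
    ∑ s', P s a s' * V s' = ∑ s', P (g • s) (g • a) s' * V s' :=
  Fintype.sum_equiv (MulAction.toPerm g) _ _ fun s' => by rw [MulAction.toPerm_apply, ← hP, ← hV]

theorem bellman_mapsTo_invariantFunctions
    (hP : ∀ s a s' (g : G), P s a s' = P (g • s) (g • a) (g • s'))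
    (hr : ∀ s a (g : G), r s a = r (g • s) (g • a))
    {T : (S → ℝ) → (S → ℝ)} (hT : ∀ V s, T V s = ⨆ a : A, (r s a + γ * ∑ s', P s a s' * V s')) :
    Set.MapsTo T (invariantFunctions G S ℝ) (invariantFunctions G S ℝ) := by
  intro V hV g s
  rw [hT, hT]
  exact (MulAction.toPerm g : Equiv.Perm A).iSup_congr fun a => by
    rw [MulAction.toPerm_apply, ← hr, ← sum_transition_mul_smul hP hV]

end Bellman

theorem stmt_14_general {S A G : Type*} [Fintype S] [Group G]
    [MulAction G S] [MulAction G A]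
    (P : S → A → S → ℝ) (r : S → A → ℝ) (γ : ℝ)
    (hP : ∀ (s : S) (a : A) (s' : S) (g : G), P s a s' = P (g • s) (g • a) (g • s'))
    (hr : ∀ (s : S) (a : A) (g : G), r s a = r (g • s) (g • a))
    (T : (S → ℝ) → (S → ℝ))
    (hT : ∀ (V : S → ℝ) (s : S), T V s = ⨆ a : A, (r s a + γ * ∑ s', P s a s' * V s')) :
    (∀ V : S → ℝ, (∀ (g : G) (s : S), V s = V (g • s)) →
      ∀ (g : G) (s : S), T V s = T V (g • s)) ∧
    (∀ (V₀ Vstar : S → ℝ), (∀ (g : G) (s : S), V₀ s = V₀ (g • s)) →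
      (∀ s : S, Tendsto (fun n : ℕ => T^[n] V₀ s) atTop (𝓝 (Vstar s))) →
      ∀ (g : G) (s : S), Vstar s = Vstar (g • s)) := by
  have hmaps := bellman_mapsTo_invariantFunctions hP hr hT
  exact ⟨fun V hV => hmaps hV, fun V₀ Vstar hV₀ hlim =>
    mem_invariantFunctions_of_tendsto (fun n => hmaps.iterate n hV₀) hlim⟩

theorem stmt_14 {S A G : Type*} [Fintype S] [Fintype A] [Nonempty A] [Group G]
    [MulAction G S] [MulAction G A]
    (P : S → A → S → ℝ) (r : S → A → ℝ) (γ : ℝ)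
    (hγ0 : 0 ≤ γ) (hγ1 : γ < 1)
    (hPnn : ∀ s a s', 0 ≤ P s a s') (hPsum : ∀ s a, ∑ s', P s a s' = 1)
    (hP : ∀ (s : S) (a : A) (s' : S) (g : G), P s a s' = P (g • s) (g • a) (g • s'))
    (hr : ∀ (s : S) (a : A) (g : G), r s a = r (g • s) (g • a))
    (T : (S → ℝ) → (S → ℝ))
    (hT : ∀ (V : S → ℝ) (s : S), T V s = ⨆ a : A, (r s a + γ * ∑ s', P s a s' * V s')) :
    (∀ V : S → ℝ, (∀ (g : G) (s : S), V s = V (g • s)) →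
      ∀ (g : G) (s : S), T V s = T V (g • s)) ∧
    (∀ (V₀ Vstar : S → ℝ), (∀ (g : G) (s : S), V₀ s = V₀ (g • s)) →
      (∀ s : S, Tendsto (fun n : ℕ => T^[n] V₀ s) atTop (𝓝 (Vstar s))) →
      ∀ (g : G) (s : S), Vstar s = Vstar (g • s)) :=
  stmt_14_general P r γ hP hr T hT
end
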